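/- If ψ^□ is a disjunction of propositional literals and ψ^◇ is a conjunction of propositional literals such that the set of complements of the literals of ψ^□ is contained in the set of literals of ψ^◇, then the S5 formula □ψ^□ ∧ ◇ψ^◇ is unsatisfiable. -/

import Mathlib

inductive S5 (α : Type) : Type where
  | atom : α → S5 α
  | neg : S5 α → S5 α
  | and : S5 α → S5 α → S5 α
  | or : S5 α → S5 α → S5 α
  | box : S5 α → S5 α
  | dia : S5 α → S5 α

def S5.sat {α : Type} (I : List (α → Bool)) : ℕ → S5 α → Prop
  | i, S5.atom p => (I.getD i (fun _ => false)) p = true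
  | i, S5.neg φ => ¬ S5.sat I i φ
  | i, S5.and φ ψ => S5.sat I i φ ∧ S5.sat I i ψ
  | i, S5.or φ ψ => S5.sat I i φ ∨ S5.sat I i ψ
  | _, S5.box φ => ∀ j, j < I.length → S5.sat I j φ
  | _, S5.dia φ => ∃ j, j < I.length ∧ S5.sat I j φ

/-- `φ₁ ∧ (φ₂ ∧ ⋯ ∧ φₙ)` for the nonempty list with head `φ` and tail `l`. -/
def bigAnd {α : Type} : S5 α → List (S5 α) → S5 α
  | φ, [] => φ
  | φ, ψ :: l => S5.and φ (bigAnd ψ l)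

/-- `φ₁ ∨ (φ₂ ∨ ⋯ ∨ φₙ)` for the nonempty list with head `φ` and tail `l`. -/
def bigOr {α : Type} : S5 α → List (S5 α) → S5 α
  | φ, [] => φ
  | φ, ψ :: l => S5.or φ (bigOr ψ l)

/-- A modal operator: `true` is `□`, `false` is `◇`. -/
def applyMod {α : Type} (b : Bool) (φ : S5 α) : S5 α :=
  if b then S5.box φ else S5.dia φ

def Satisfiable {α : Type} (φ : S5 α) : Prop :=
  ∃ I : List (α → Bool), I ≠ [] ∧ S5.sat I 0 φ

/-- `litF (true, p) = p` and `litF (false, p) = ¬p`. -/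
def litF {α : Type} (ℓ : Bool × α) : S5 α :=
  if ℓ.1 then S5.atom ℓ.2 else S5.neg (S5.atom ℓ.2)

/-- Complement of a propositional literal. -/
def litCompl {α : Type} (ℓ : Bool × α) : Bool × α := (!ℓ.1, ℓ.2)


lemma sat_bigOr_iff {α : Type} (I : List (α → Bool)) (i : ℕ) (φ : S5 α) (l : List (S5 α)) :
    S5.sat I i (bigOr φ l) ↔ ∃ ψ ∈ φ :: l, S5.sat I i ψ := by
  induction l generalizing φ with
  | nil => simp [bigOr]
  | cons ψ l ih =>
    simp only [bigOr, S5.sat, ih]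
    constructor
    · rintro (h | ⟨χ, hχ, hs⟩)
      · exact ⟨φ, by simp, h⟩
      · exact ⟨χ, by simp at hχ ⊢; tauto, hs⟩
    · rintro ⟨χ, hχ, hs⟩
      simp at hχ
      rcases hχ with rfl | hχ
      · exact Or.inl hs
      · exact Or.inr ⟨χ, by simpa using hχ, hs⟩

lemma sat_bigAnd {α : Type} (I : List (α → Bool)) (i : ℕ) (φ : S5 α) (l : List (S5 α))
    (h : S5.sat I i (bigAnd φ l)) : ∀ ψ ∈ φ :: l, S5.sat I i ψ := by
  induction l generalizing φ with
  | nil => simpa [bigAnd] using h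
  | cons ψ l ih =>
    simp only [bigAnd, S5.sat] at h
    intro χ hχ
    simp at hχ
    rcases hχ with rfl | hχ
    · exact h.1
    · exact ih ψ h.2 χ (by simpa using hχ)

lemma lit_compl_conflict {α : Type} (I : List (α → Bool)) (i : ℕ) (ℓ : Bool × α)
    (h1 : S5.sat I i (litF ℓ)) (h2 : S5.sat I i (litF (litCompl ℓ))) : False := by
  rcases ℓ with ⟨b, p⟩
  cases b <;> simp [litF, litCompl, S5.sat] at h1 h2 <;> simp [h1] at h2

theorem box_dia_conflict_unsat {α : Type} (b : Bool × α) (bs : List (Bool × α))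
    (c : Bool × α) (cs : List (Bool × α))
    (h : ∀ ℓ ∈ b :: bs, litCompl ℓ ∈ c :: cs) :
    ¬ Satisfiable (S5.and (S5.box (bigOr (litF b) (bs.map litF)))
        (S5.dia (bigAnd (litF c) (cs.map litF)))) := by
  rintro ⟨I, -, hbox, hdia⟩
  obtain ⟨j, hj, hsat⟩ := hdia
  obtain ⟨ψ, hψ, hψs⟩ := (sat_bigOr_iff I j (litF b) (bs.map litF)).1 (hbox j hj)
  have : ∃ ℓ ∈ b :: bs, ψ = litF ℓ := by
    rcases List.mem_cons.1 hψ with rfl | hψ'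
    · exact ⟨b, List.mem_cons_self, rfl⟩
    · obtain ⟨ℓ, hℓ, rfl⟩ := List.mem_map.1 hψ'
      exact ⟨ℓ, List.mem_cons_of_mem _ hℓ, rfl⟩
  obtain ⟨ℓ, hℓ, rfl⟩ := this
  have hc : litCompl ℓ ∈ c :: cs := h ℓ hℓ
  have hcs : S5.sat I j (litF (litCompl ℓ)) := by
    apply sat_bigAnd I j _ _ hsat
    rcases List.mem_cons.1 hc with h' | h'
    · rw [← h']; exact List.mem_cons_self
    · exact List.mem_cons_of_mem _ (List.mem_map.2 ⟨_, h', rfl⟩)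
  exact lit_compl_conflict I j ℓ hψs hcs
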